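/- For every integer n ≥ 1, ∑_{j=1}^n L( sin²(π/(n+3)) / sin²(π(j+1)/(n+3)) ) = (π²/6)·(2n/(n+3)), where L is the Rogers dilogarithm. -/

import Mathlib

/-!
Write `s k = sin (k π / (n + 3))` and `x i j = s 1 s i / (s (j + 1) s (i + j))`, so that the
summands are `L (x 1 j)`. Ptolemy's relation `s (w + u) s (w + v) = s w s (w + u + v) + s u s v`
turns Abel's five-term identity
`L x + L y = L (x y) + L (x (1 - y) / (1 - x y)) + L (y (1 - x) / (1 - x y))`,
applied to `x (i + 1) j` and `x (j + 1) i`, into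
`L (x (i + 1) j) + L (x (j + 1) i) = L (x 1 (i + j)) + L (x i j) + L (x j i)`.
For the antidiagonal sums `D N = ∑_{i + j = N} L (x i j)` this gives
`2 D (N + 1) = (N + 1) L (x 1 N) + 2 D N`, with `D 1 = L 1`; on the last antidiagonal
`x i j + x j i = 1`, so the reflection formula `L x + L (1 - x) = L 1` gives
`2 D (n + 1) = (n + 2) L 1`. Telescoping yields `∑ (j + 1) L (x 1 j) = n L 1`, and the symmetry
`x 1 j = x 1 (n + 1 - j)` turns this into `(n + 3) ∑ L (x 1 j) = 2 n L 1`.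

The five-term and reflection identities hold because both sides have the same derivative and agree
at an endpoint; `L 1 = ζ(2) = π² / 6` comes from integrating the power series of
`log (1 - t) / t` termwise.
-/

open scoped Real

/-- The Rogers dilogarithm,
`L(z) = (1/2)∫₀ᶻ (log w d log(1-w) − log(1-w) d log w)
      = -(1/2) ∫₀ᶻ (log(1-t)/t + log t/(1-t)) dt`. -/
noncomputable def rogersL (z : ℝ) : ℝ :=
  -(1 / 2) * ∫ t in (0:ℝ)..z, (Real.log (1 - t) / t + Real.log t / (1 - t))

open Real

section Analysis

open Set MeasureTheory intervalIntegral

noncomputable def rogersIntegrand (t : ℝ) : ℝ := log (1 - t) / t + log t / (1 - t)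

lemma rogersIntegrand_one_sub (t : ℝ) : rogersIntegrand (1 - t) = rogersIntegrand t := by
  simp only [rogersIntegrand, sub_sub_cancel]
  ring

@[simp] lemma rogersL_zero : rogersL 0 = 0 := by simp [rogersL]

lemma abs_log_one_sub_div_le {t : ℝ} (h0 : 0 < t) (h1 : t ≤ 1) :
    |log (1 - t) / t| ≤ 2 - 2 * log (1 - t) := by
  rcases h1.eq_or_lt with rfl | h1
  · norm_num -- `log 0 = 0` in Mathlib
  have hlog : log (1 - t) ≤ 0 := log_nonpos (by linarith) (by linarith)
  have hlog' : -(t / (1 - t)) ≤ log (1 - t) := by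
    have := one_sub_inv_le_log_of_pos (x := 1 - t) (by linarith)
    rwa [show 1 - (1 - t)⁻¹ = -(t / (1 - t)) by
      field_simp [(by linarith : (0 : ℝ) < 1 - t).ne']; ring] at this
  rw [abs_div, abs_of_nonpos hlog, abs_of_pos h0, div_le_iff₀ h0]
  rcases le_or_gt t (1 / 2) with ht | ht
  · have : t / (1 - t) ≤ 2 * t := by rw [div_le_iff₀ (by linarith)]; nlinarith
    nlinarith
  · nlinarith

lemma intervalIntegrable_log_one_sub_div :
    IntervalIntegrable (fun t => log (1 - t) / t) volume 0 1 := by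
  have hlog : IntervalIntegrable (fun t => log (1 - t)) volume 0 1 := by
    simpa using (intervalIntegrable_log' (a := 1) (b := 0)).comp_sub_left 1
  have hbound : IntervalIntegrable (fun t => 2 - 2 * log (1 - t)) volume 0 1 :=
    intervalIntegrable_const.sub (hlog.const_mul 2)
  refine hbound.mono_fun' (Measurable.aestronglyMeasurable (by fun_prop)) ?_
  rw [uIoc_of_le zero_le_one]
  exact ae_restrict_of_forall_mem measurableSet_Ioc fun t ht => abs_log_one_sub_div_le ht.1 ht.2

lemma intervalIntegrable_log_div_one_sub :
    IntervalIntegrable (fun t => log t / (1 - t)) volume 0 1 := by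
  simpa using (intervalIntegrable_log_one_sub_div.comp_sub_left 1).symm

lemma intervalIntegrable_rogersIntegrand : IntervalIntegrable rogersIntegrand volume 0 1 :=
  intervalIntegrable_log_one_sub_div.add intervalIntegrable_log_div_one_sub

lemma intervalIntegrable_rogersIntegrand_of_mem {z : ℝ} (hz : z ∈ Icc (0 : ℝ) 1) :
    IntervalIntegrable rogersIntegrand volume 0 z :=
  intervalIntegrable_rogersIntegrand.mono_set (by
    rw [uIcc_of_le hz.1, uIcc_of_le zero_le_one]; exact Icc_subset_Icc le_rfl hz.2)

lemma continuousOn_rogersL : ContinuousOn rogersL (Icc 0 1) := by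
  have h := (continuousOn_primitive_interval' intervalIntegrable_rogersIntegrand
    left_mem_uIcc).const_smul (-(1 / 2) : ℝ)
  rw [uIcc_of_le zero_le_one] at h
  exact h

lemma continuousAt_rogersIntegrand {x : ℝ} (hx : x ∈ Ioo (0 : ℝ) 1) :
    ContinuousAt rogersIntegrand x := by
  have : x ≠ 0 := hx.1.ne'
  have : 1 - x ≠ 0 := by linarith [hx.2]
  unfold rogersIntegrand
  fun_prop (disch := assumption)

lemma hasDerivAt_rogersL {x : ℝ} (hx : x ∈ Ioo (0 : ℝ) 1) :
    HasDerivAt rogersL (-(1 / 2) * rogersIntegrand x) x :=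
  (integral_hasDerivAt_right (intervalIntegrable_rogersIntegrand_of_mem (Ioo_subset_Icc_self hx))
    (ContinuousAt.stronglyMeasurableAtFilter isOpen_Ioo
      (fun _ hy => continuousAt_rogersIntegrand hy) x hx)
    (continuousAt_rogersIntegrand hx)).const_mul _

lemma hasSum_one_div_succ_sq : HasSum (fun k : ℕ => 1 / ((k : ℝ) + 1) ^ 2) (π ^ 2 / 6) := by
  simpa using (hasSum_nat_add_iff' 1).mpr hasSum_zeta_two

lemma integral_Ioo_pow_div_succ (k : ℕ) :
    ∫ t in Ioo (0 : ℝ) 1, t ^ k / (k + 1) = 1 / ((k : ℝ) + 1) ^ 2 := by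
  rw [← integral_Ioc_eq_integral_Ioo, ← intervalIntegral.integral_of_le zero_le_one,
    intervalIntegral.integral_div, integral_pow]
  field_simp
  ring

lemma integral_log_one_sub_div : ∫ t in (0 : ℝ)..1, log (1 - t) / t = -(π ^ 2 / 6) := by
  set F : ℕ → ℝ → ℝ := fun k t => t ^ k / (k + 1)
  have hF_int : ∀ k, IntegrableOn (F k) (Ioo 0 1) := fun k =>
    (((intervalIntegrable_pow k).div_const _).def'.mono_set
      (by rw [uIoc_of_le zero_le_one]; exact Ioo_subset_Ioc_self))
  have hF_norm (k : ℕ) : ∫ t in Ioo (0 : ℝ) 1, ‖F k t‖ = 1 / ((k : ℝ) + 1) ^ 2 := by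
    rw [← integral_Ioo_pow_div_succ k]
    refine setIntegral_congr_fun measurableSet_Ioo fun t ht => ?_
    exact Real.norm_of_nonneg (by have := ht.1; positivity)
  have hseries : ∀ t ∈ Ioo (0 : ℝ) 1, ∑' k, F k t = -(log (1 - t) / t) := fun t ht => by
    have h := (hasSum_pow_div_log_of_abs_lt_one
      (abs_lt.mpr ⟨by linarith [ht.1], ht.2⟩)).div_const t
    refine (h.congr_fun fun k => ?_).tsum_eq.trans (by ring)
    simp only [F, pow_succ]
    field_simp [ht.1.ne']
  have key := hasSum_integral_of_summable_integral_norm hF_int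
    (hasSum_one_div_succ_sq.summable.congr fun k => (hF_norm k).symm)
  rw [setIntegral_congr_fun measurableSet_Ioo hseries, MeasureTheory.integral_neg] at key
  have hval : -∫ t in Ioo (0 : ℝ) 1, log (1 - t) / t = π ^ 2 / 6 :=
    key.unique (hasSum_one_div_succ_sq.congr_fun fun k => integral_Ioo_pow_div_succ k)
  rw [intervalIntegral.integral_of_le zero_le_one, integral_Ioc_eq_integral_Ioo]
  linarith

lemma rogersL_one : rogersL 1 = π ^ 2 / 6 := by
  have hrefl : ∫ t in (0 : ℝ)..1, log t / (1 - t) = ∫ t in (0 : ℝ)..1, log (1 - t) / t := by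
    simpa using intervalIntegral.integral_comp_sub_left (fun t => log (1 - t) / t) (1 : ℝ)
      (a := 0) (b := 1)
  rw [rogersL, intervalIntegral.integral_add intervalIntegrable_log_one_sub_div
    intervalIntegrable_log_div_one_sub, hrefl, integral_log_one_sub_div]
  ring

lemma eq_of_hasDerivAt_zero {f : ℝ → ℝ} {a b : ℝ} (hab : a ≤ b)
    (hf : ContinuousOn f (Icc a b)) (hf' : ∀ x ∈ Ioo a b, HasDerivAt f 0 x) : f b = f a := by
  rcases hab.eq_or_lt with rfl | hab
  · rfl
  obtain ⟨c, -, hc⟩ := exists_hasDerivAt_eq_slope f (fun _ => 0) hab hf hf'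
  rw [eq_div_iff (sub_ne_zero.mpr hab.ne')] at hc
  linarith

lemma rogersL_add_rogersL_one_sub {x : ℝ} (hx : x ∈ Icc (0 : ℝ) 1) :
    rogersL x + rogersL (1 - x) = π ^ 2 / 6 := by
  have hcont : ContinuousOn (fun u => rogersL u + rogersL (1 - u)) (Icc 0 x) := by
    refine (continuousOn_rogersL.mono (Icc_subset_Icc le_rfl hx.2)).add
      (continuousOn_rogersL.comp (by fun_prop) fun u hu => ?_)
    exact ⟨by linarith [hu.2, hx.2], by linarith [hu.1]⟩
  have hderiv : ∀ u ∈ Ioo 0 x, HasDerivAt (fun u => rogersL u + rogersL (1 - u)) 0 u := by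
    intro u hu
    have hu1 : u ∈ Ioo (0 : ℝ) 1 := ⟨hu.1, hu.2.trans_le hx.2⟩
    have h := (hasDerivAt_rogersL hu1).add ((hasDerivAt_rogersL
      (⟨by linarith [hu1.2], by linarith [hu1.1]⟩ : 1 - u ∈ Ioo (0 : ℝ) 1)).comp u
      ((hasDerivAt_id u).const_sub 1))
    exact h.congr_deriv (by rw [rogersIntegrand_one_sub]; ring)
  have h := eq_of_hasDerivAt_zero hx.1 hcont hderiv
  simp only [sub_zero, rogersL_zero, rogersL_one, zero_add] at h
  exact h

lemma rogersIntegrand_five_term {t y : ℝ} (ht : t ∈ Ioo (0 : ℝ) 1)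
    (hy : y ∈ Ioo (0 : ℝ) 1) :
    rogersIntegrand (t * y) * y
      + rogersIntegrand (t * (1 - y) / (1 - t * y)) * ((1 - y) / (1 - t * y) ^ 2)
      - rogersIntegrand (y * (1 - t) / (1 - t * y)) * (y * (1 - y) / (1 - t * y) ^ 2)
      = rogersIntegrand t := by
  obtain ⟨ht0, ht1⟩ := ht
  obtain ⟨hy0, hy1⟩ := hy
  have hD : 0 < 1 - t * y := by nlinarith
  have ht' : 0 < 1 - t := by linarith
  have hy' : 0 < 1 - y := by linarith
  have e1 : 1 - t * (1 - y) / (1 - t * y) = (1 - t) / (1 - t * y) := by field_simp; ring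
  have e2 : 1 - y * (1 - t) / (1 - t * y) = (1 - y) / (1 - t * y) := by
    rw [eq_div_iff hD.ne', sub_mul, div_mul_cancel₀ _ hD.ne']; ring
  have l1 : log (t * y) = log t + log y := log_mul ht0.ne' hy0.ne'
  have l2 : log (t * (1 - y) / (1 - t * y)) = log t + log (1 - y) - log (1 - t * y) := by
    rw [log_div (by positivity) hD.ne', log_mul ht0.ne' hy'.ne']
  have l3 : log (y * (1 - t) / (1 - t * y)) = log y + log (1 - t) - log (1 - t * y) := by
    rw [log_div (by positivity) hD.ne', log_mul hy0.ne' ht'.ne']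
  have l4 : log ((1 - t) / (1 - t * y)) = log (1 - t) - log (1 - t * y) := log_div ht'.ne' hD.ne'
  have l5 : log ((1 - y) / (1 - t * y)) = log (1 - y) - log (1 - t * y) := log_div hy'.ne' hD.ne'
  simp only [rogersIntegrand, e1, e2, l1, l2, l3, l4, l5]
  field_simp
  ring

noncomputable def fiveTermDefect (y u : ℝ) : ℝ :=
  rogersL (u * y) + rogersL (u * (1 - y) / (1 - u * y)) + rogersL (y * (1 - u) / (1 - u * y))
    - rogersL u

lemma continuousOn_fiveTermDefect {y : ℝ} (hy : y ∈ Ioo (0 : ℝ) 1) :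
    ContinuousOn (fiveTermDefect y) (Icc 0 1) := by
  obtain ⟨hy0, hy1⟩ := hy
  have hD : ∀ u ∈ Icc (0 : ℝ) 1, 0 < 1 - u * y := fun u hu => by nlinarith [hu.2]
  refine ContinuousOn.sub (ContinuousOn.add (ContinuousOn.add ?_ ?_) ?_) continuousOn_rogersL
  · refine continuousOn_rogersL.comp (by fun_prop) fun u hu => ?_
    exact ⟨mul_nonneg hu.1 hy0.le, by nlinarith [hu.1, hu.2]⟩
  · refine continuousOn_rogersL.comp
      ((by fun_prop : Continuous fun u : ℝ => u * (1 - y)).continuousOn.div (by fun_prop)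
        fun u hu => (hD u hu).ne') fun u hu => ?_
    exact ⟨div_nonneg (by nlinarith [hu.1]) (hD u hu).le,
      (div_le_one (hD u hu)).mpr (by nlinarith [hu.2])⟩
  · refine continuousOn_rogersL.comp
      ((by fun_prop : Continuous fun u : ℝ => y * (1 - u)).continuousOn.div (by fun_prop)
        fun u hu => (hD u hu).ne') fun u hu => ?_
    exact ⟨div_nonneg (by nlinarith [hu.2]) (hD u hu).le,
      (div_le_one (hD u hu)).mpr (by nlinarith [hu.1])⟩

lemma hasDerivAt_fiveTermDefect {y t : ℝ} (hy : y ∈ Ioo (0 : ℝ) 1)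
    (ht : t ∈ Ioo (0 : ℝ) 1) :
    HasDerivAt (fiveTermDefect y) 0 t := by
  obtain ⟨hy0, hy1⟩ := hy
  obtain ⟨ht0, ht1⟩ := ht
  have hD : 0 < 1 - t * y := by nlinarith
  have dB : HasDerivAt (fun u => u * (1 - y) / (1 - u * y)) ((1 - y) / (1 - t * y) ^ 2) t := by
    refine (((hasDerivAt_id' t).mul_const (1 - y)).div
      (((hasDerivAt_id' t).mul_const y).const_sub 1) hD.ne').congr_deriv ?_
    field_simp
    ring
  have dC : HasDerivAt (fun u => y * (1 - u) / (1 - u * y))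
      (-(y * (1 - y) / (1 - t * y) ^ 2)) t := by
    refine ((((hasDerivAt_id' t).const_sub 1).const_mul y).div
      (((hasDerivAt_id' t).mul_const y).const_sub 1) hD.ne').congr_deriv ?_
    field_simp
    ring
  have mA : t * y ∈ Ioo (0 : ℝ) 1 := ⟨by positivity, by nlinarith⟩
  have mB : t * (1 - y) / (1 - t * y) ∈ Ioo (0 : ℝ) 1 :=
    ⟨div_pos (by nlinarith) hD, (div_lt_one hD).mpr (by nlinarith)⟩
  have mC : y * (1 - t) / (1 - t * y) ∈ Ioo (0 : ℝ) 1 :=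
    ⟨div_pos (by nlinarith) hD, (div_lt_one hD).mpr (by nlinarith)⟩
  refine ((((hasDerivAt_rogersL mA).comp t ((hasDerivAt_id' t).mul_const y)).add
    ((hasDerivAt_rogersL mB).comp t dB)).add ((hasDerivAt_rogersL mC).comp t dC)).sub
    (hasDerivAt_rogersL ⟨ht0, ht1⟩) |>.congr_deriv ?_
  rw [← rogersIntegrand_five_term ⟨ht0, ht1⟩ ⟨hy0, hy1⟩]
  ring

lemma rogersL_five_term_of_mem_Ioo {x y : ℝ} (hx : x ∈ Icc (0 : ℝ) 1)
    (hy : y ∈ Ioo (0 : ℝ) 1) :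
    rogersL x + rogersL y
      = rogersL (x * y) + rogersL (x * (1 - y) / (1 - x * y))
        + rogersL (y * (1 - x) / (1 - x * y)) := by
  have h := eq_of_hasDerivAt_zero hx.1
    ((continuousOn_fiveTermDefect hy).mono (Icc_subset_Icc le_rfl hx.2))
    fun t ht => hasDerivAt_fiveTermDefect hy ⟨ht.1, ht.2.trans_le hx.2⟩
  simp only [fiveTermDefect, zero_mul, rogersL_zero, sub_zero, mul_one, div_one, zero_add] at h
  linarith

lemma rogersL_five_term {x y : ℝ} (hx : x ∈ Icc (0 : ℝ) 1) (hy : y ∈ Icc (0 : ℝ) 1)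
    (hxy : x * y < 1) :
    rogersL x + rogersL y
      = rogersL (x * y) + rogersL (x * (1 - y) / (1 - x * y))
        + rogersL (y * (1 - x) / (1 - x * y)) := by
  rcases hy.1.eq_or_lt with rfl | hy0
  · simp
  rcases hy.2.eq_or_lt with rfl | hy1
  · rw [mul_one] at hxy
    rw [sub_self, mul_zero, zero_div, rogersL_zero, one_mul, mul_one,
      div_self (sub_ne_zero.mpr hxy.ne')]
    ring
  exact rogersL_five_term_of_mem_Ioo hx ⟨hy0, hy1⟩

end Analysis

lemma sin_add_mul_sin_add (w u v : ℝ) :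
    sin (w + u) * sin (w + v) = sin w * sin (w + u + v) + sin u * sin v := by
  simp only [sin_add, cos_add]
  linear_combination (sin u * sin v) * sin_sq_add_cos_sq w

-- `2 * chord n k` is the length of a chord spanning `k` sides of the regular `(n + 3)`-gon
-- inscribed in the unit circle; `chord_ptolemy` is Ptolemy's theorem for its vertices.
noncomputable def chord (n k : ℕ) : ℝ := sin (π * k / (n + 3))

section Polygon

variable {n : ℕ}

@[simp] lemma chord_zero : chord n 0 = 0 := by simp [chord]

lemma chord_pos {k : ℕ} (hk0 : 0 < k) (hk : k < n + 3) : 0 < chord n k := by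
  have hk' : (k : ℝ) < n + 3 := by exact_mod_cast hk
  refine sin_pos_of_pos_of_lt_pi (by positivity) ?_
  rw [div_lt_iff₀ (by positivity)]
  nlinarith [pi_pos]

lemma chord_nonneg {k : ℕ} (hk : k ≤ n + 3) : 0 ≤ chord n k := by
  have hk' : (k : ℝ) ≤ n + 3 := by exact_mod_cast hk
  refine sin_nonneg_of_nonneg_of_le_pi (by positivity) ?_
  rw [div_le_iff₀ (by positivity)]
  nlinarith [pi_pos]

lemma chord_eq_of_add_eq {k l : ℕ} (h : k + l = n + 3) : chord n k = chord n l := by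
  have h' : (k : ℝ) = n + 3 - l := by rw [eq_sub_iff_add_eq]; exact_mod_cast h
  rw [chord, chord, h', ← sin_pi_sub]
  congr 1
  field_simp
  ring

lemma chord_ptolemy (w u v : ℕ) :
    chord n (w + u) * chord n (w + v)
      = chord n w * chord n (w + u + v) + chord n u * chord n v := by
  simp only [chord, Nat.cast_add, mul_add, add_div]
  exact sin_add_mul_sin_add _ _ _

end Polygon

-- The cross-ratio of the vertices `0, 1, j + 1, i + j + 1` of the polygon.
noncomputable def crossRatio (n i j : ℕ) : ℝ :=
  chord n 1 * chord n i / (chord n (j + 1) * chord n (i + j))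

section CrossRatio

variable {n : ℕ}

@[simp] lemma crossRatio_zero_left (j : ℕ) : crossRatio n 0 j = 0 := by simp [crossRatio]

lemma crossRatio_zero_right {i : ℕ} (hi0 : 0 < i) (hi : i < n + 3) : crossRatio n i 0 = 1 := by
  have h1 := (chord_pos (n := n) one_pos (by omega)).ne'
  have hi' := (chord_pos (n := n) hi0 hi).ne'
  simp only [crossRatio, zero_add, add_zero]
  field_simp

lemma crossRatio_nonneg {i j : ℕ} (h : i + j ≤ n + 2) : 0 ≤ crossRatio n i j :=
  div_nonneg (mul_nonneg (chord_nonneg (by omega)) (chord_nonneg (by omega)))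
    (mul_nonneg (chord_nonneg (by omega)) (chord_nonneg (by omega)))

lemma one_sub_crossRatio_succ {i j : ℕ} (h : i + j ≤ n + 1) :
    1 - crossRatio n (i + 1) j
      = chord n j * chord n (i + j + 2) / (chord n (j + 1) * chord n (i + j + 1)) := by
  have hj := (chord_pos (n := n) (k := j + 1) (by omega) (by omega)).ne'
  have hij := (chord_pos (n := n) (k := i + j + 1) (by omega) (by omega)).ne'
  have hptolemy := chord_ptolemy (n := n) j 1 (i + 1)
  rw [show j + (i + 1) = i + j + 1 by omega, show j + 1 + (i + 1) = i + j + 2 by omega] at hptolemy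
  rw [crossRatio, show i + 1 + j = i + j + 1 by omega]
  field_simp
  linear_combination hptolemy

lemma crossRatio_succ_le_one {i j : ℕ} (h : i + j ≤ n + 1) : crossRatio n (i + 1) j ≤ 1 := by
  have : 0 ≤ 1 - crossRatio n (i + 1) j := by
    rw [one_sub_crossRatio_succ h]
    exact div_nonneg (mul_nonneg (chord_nonneg (by omega)) (chord_nonneg (by omega)))
      (mul_nonneg (chord_nonneg (by omega)) (chord_nonneg (by omega)))
  linarith

lemma one_sub_crossRatio_one {k : ℕ} (h : k ≤ n + 1) :
    1 - crossRatio n 1 k = chord n k * chord n (k + 2) / (chord n (k + 1) * chord n (k + 1)) := by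
  simpa using one_sub_crossRatio_succ (n := n) (i := 0) (j := k) (by omega)

lemma crossRatio_one_lt_one {k : ℕ} (hk0 : 0 < k) (hk : k ≤ n) : crossRatio n 1 k < 1 := by
  have : 0 < 1 - crossRatio n 1 k := by
    rw [one_sub_crossRatio_one (by omega)]
    exact div_pos (mul_pos (chord_pos hk0 (by omega)) (chord_pos (by omega) (by omega)))
      (mul_pos (chord_pos (by omega) (by omega)) (chord_pos (by omega) (by omega)))
  linarith

lemma crossRatio_succ_mul_crossRatio_succ {i j : ℕ} (h : i + j ≤ n + 1) :
    crossRatio n (i + 1) j * crossRatio n (j + 1) i = crossRatio n 1 (i + j) := by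
  have hi := (chord_pos (n := n) (k := i + 1) (by omega) (by omega)).ne'
  have hj := (chord_pos (n := n) (k := j + 1) (by omega) (by omega)).ne'
  simp only [crossRatio, show i + 1 + j = i + j + 1 by omega, show j + 1 + i = i + j + 1 by omega,
    show 1 + (i + j) = i + j + 1 by omega]
  field_simp

lemma crossRatio_abel {i j : ℕ} (h0 : 0 < i + j) (h : i + j ≤ n) :
    crossRatio n (i + 1) j * (1 - crossRatio n (j + 1) i)
        / (1 - crossRatio n (i + 1) j * crossRatio n (j + 1) i)
      = crossRatio n i j := by
  have hi := (chord_pos (n := n) (k := i + 1) (by omega) (by omega)).ne'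
  have hj := (chord_pos (n := n) (k := j + 1) (by omega) (by omega)).ne'
  have hij := (chord_pos (n := n) (k := i + j) h0 (by omega)).ne'
  have hij1 := (chord_pos (n := n) (k := i + j + 1) (by omega) (by omega)).ne'
  have hij2 := (chord_pos (n := n) (k := i + j + 2) (by omega) (by omega)).ne'
  rw [crossRatio_succ_mul_crossRatio_succ (by omega), one_sub_crossRatio_one (by omega),
    one_sub_crossRatio_succ (by omega)]
  simp only [crossRatio, show i + 1 + j = i + j + 1 by omega, show j + i = i + j by omega]
  field_simp

lemma rogersL_crossRatio_five_term {i j : ℕ} (h0 : 0 < i + j) (h : i + j ≤ n) :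
    rogersL (crossRatio n (i + 1) j) + rogersL (crossRatio n (j + 1) i)
      = rogersL (crossRatio n 1 (i + j)) + rogersL (crossRatio n i j)
        + rogersL (crossRatio n j i) := by
  have hX : crossRatio n (i + 1) j ∈ Set.Icc 0 1 :=
    ⟨crossRatio_nonneg (by omega), crossRatio_succ_le_one (by omega)⟩
  have hY : crossRatio n (j + 1) i ∈ Set.Icc 0 1 :=
    ⟨crossRatio_nonneg (by omega), crossRatio_succ_le_one (by omega)⟩
  have hXY := crossRatio_succ_mul_crossRatio_succ (n := n) (i := i) (j := j) (by omega)
  have habel := crossRatio_abel (n := n) (i := j) (j := i) (by omega) (by omega)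
  rw [mul_comm (crossRatio n (j + 1) i) (crossRatio n (i + 1) j)] at habel
  rw [rogersL_five_term hX hY (hXY ▸ crossRatio_one_lt_one h0 h), crossRatio_abel h0 h, habel,
    hXY]

lemma crossRatio_add_crossRatio_swap {i j : ℕ} (h : i + j = n + 1) :
    crossRatio n i j + crossRatio n j i = 1 := by
  have h1 := (chord_pos (n := n) (k := i + 1) (by omega) (by omega)).ne'
  have h2 := (chord_pos (n := n) (k := 2) (by omega) (by omega)).ne'
  have hptolemy := chord_ptolemy (n := n) 1 i 1
  rw [add_comm 1 i, show i + 1 + 1 = i + 2 by omega, one_add_one_eq_two] at hptolemy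
  simp only [crossRatio, add_comm j i, h,
    chord_eq_of_add_eq (show j + 1 + (i + 1) = n + 3 by omega),
    chord_eq_of_add_eq (show j + (i + 2) = n + 3 by omega),
    chord_eq_of_add_eq (show n + 1 + 2 = n + 3 by omega)]
  field_simp
  linear_combination -hptolemy

lemma crossRatio_one_eq_of_add_eq {k l : ℕ} (h : k + l = n + 1) :
    crossRatio n 1 k = crossRatio n 1 l := by
  simp only [crossRatio, add_comm 1, chord_eq_of_add_eq (show k + 1 + (l + 1) = n + 3 by omega)]

end CrossRatio

open Finset

noncomputable def diagSum (n N : ℕ) : ℝ :=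
  ∑ p ∈ antidiagonal N, rogersL (crossRatio n p.1 p.2)

section DiagSum

variable {n : ℕ}

lemma diagSum_eq_sum_swap (N : ℕ) :
    diagSum n N = ∑ p ∈ antidiagonal N, rogersL (crossRatio n p.2 p.1) :=
  (Nat.sum_antidiagonal_swap (f := fun p => rogersL (crossRatio n p.1 p.2))).symm

lemma diagSum_succ (N : ℕ) :
    diagSum n (N + 1) = ∑ p ∈ antidiagonal N, rogersL (crossRatio n (p.1 + 1) p.2) := by
  simp [diagSum, Nat.sum_antidiagonal_succ]

lemma diagSum_succ_eq_sum_swap (N : ℕ) :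
    diagSum n (N + 1) = ∑ p ∈ antidiagonal N, rogersL (crossRatio n (p.2 + 1) p.1) := by
  rw [diagSum_succ]
  exact (Nat.sum_antidiagonal_swap (f := fun p => rogersL (crossRatio n (p.1 + 1) p.2))).symm

lemma diagSum_one : diagSum n 1 = π ^ 2 / 6 := by
  simp only [diagSum_succ, Nat.antidiagonal_zero, sum_singleton, zero_add]
  rw [crossRatio_zero_right one_pos (by omega), rogersL_one]

lemma two_mul_diagSum_succ {N : ℕ} (h0 : 0 < N) (h : N ≤ n) :
    2 * diagSum n (N + 1) = (N + 1) * rogersL (crossRatio n 1 N) + 2 * diagSum n N := by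
  calc 2 * diagSum n (N + 1)
      = ∑ p ∈ antidiagonal N,
          (rogersL (crossRatio n (p.1 + 1) p.2) + rogersL (crossRatio n (p.2 + 1) p.1)) := by
        rw [sum_add_distrib, ← diagSum_succ, ← diagSum_succ_eq_sum_swap, two_mul]
    _ = ∑ p ∈ antidiagonal N, (rogersL (crossRatio n 1 N)
          + (rogersL (crossRatio n p.1 p.2) + rogersL (crossRatio n p.2 p.1))) := by
        refine sum_congr rfl fun p hp => ?_
        have hp := HasAntidiagonal.mem_antidiagonal.mp hp
        rw [rogersL_crossRatio_five_term (by omega) (by omega), hp, add_assoc]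
    _ = (N + 1) * rogersL (crossRatio n 1 N) + 2 * diagSum n N := by
        rw [sum_add_distrib, sum_const, Nat.card_antidiagonal, nsmul_eq_mul, sum_add_distrib,
          ← diagSum, ← diagSum_eq_sum_swap, two_mul]
        push_cast
        ring

lemma two_mul_diagSum_top : 2 * diagSum n (n + 1) = (n + 2) * (π ^ 2 / 6) := by
  have hpair : ∀ p ∈ antidiagonal (n + 1),
      rogersL (crossRatio n p.1 p.2) + rogersL (crossRatio n p.2 p.1) = π ^ 2 / 6 := by
    intro p hp
    have hp := HasAntidiagonal.mem_antidiagonal.mp hp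
    have hswap := crossRatio_nonneg (n := n) (i := p.2) (j := p.1) (by omega)
    rw [eq_sub_of_add_eq' (crossRatio_add_crossRatio_swap hp)] at hswap ⊢
    exact rogersL_add_rogersL_one_sub ⟨crossRatio_nonneg (by omega), by linarith⟩
  rw [two_mul]
  nth_rewrite 2 [diagSum_eq_sum_swap]
  rw [diagSum, ← sum_add_distrib, sum_congr rfl hpair, sum_const, Nat.card_antidiagonal,
    nsmul_eq_mul]
  push_cast
  ring

lemma sum_Icc_succ_mul_rogersL_crossRatio_one_of_le {N : ℕ} (hN : N ≤ n) :
    ∑ k ∈ Icc 1 N, ((k : ℝ) + 1) * rogersL (crossRatio n 1 k)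
      = 2 * diagSum n (N + 1) - 2 * diagSum n 1 := by
  induction N with
  | zero => simp
  | succ N ih =>
    rw [sum_Icc_succ_top (by omega), ih (by omega),
      two_mul_diagSum_succ (N := N + 1) (by omega) hN]
    push_cast
    ring

lemma sum_Icc_succ_mul_rogersL_crossRatio_one :
    ∑ k ∈ Icc 1 n, ((k : ℝ) + 1) * rogersL (crossRatio n 1 k) = n * (π ^ 2 / 6) := by
  rw [sum_Icc_succ_mul_rogersL_crossRatio_one_of_le le_rfl, two_mul_diagSum_top, diagSum_one]
  ring

lemma sum_Icc_rogersL_crossRatio_one :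
    ((n : ℝ) + 3) * ∑ k ∈ Icc 1 n, rogersL (crossRatio n 1 k) = 2 * n * (π ^ 2 / 6) := by
  have hreflect : ∑ k ∈ Icc 1 n, ((n : ℝ) + 2 - k) * rogersL (crossRatio n 1 k)
      = ∑ k ∈ Icc 1 n, ((k : ℝ) + 1) * rogersL (crossRatio n 1 k) := by
    have hmem : ∀ k ∈ Icc 1 n, n + 1 - k ∈ Icc 1 n := fun k hk => by
      simp only [mem_Icc] at hk ⊢; omega
    have hinv : ∀ k ∈ Icc 1 n, n + 1 - (n + 1 - k) = k := fun k hk => by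
      simp only [mem_Icc] at hk; omega
    refine sum_nbij' (fun k => n + 1 - k) (fun k => n + 1 - k) hmem hmem hinv hinv fun k hk => ?_
    simp only [mem_Icc] at hk
    rw [crossRatio_one_eq_of_add_eq (l := n + 1 - k) (by omega), Nat.cast_sub (by omega)]
    push_cast
    ring
  calc ((n : ℝ) + 3) * ∑ k ∈ Icc 1 n, rogersL (crossRatio n 1 k)
      = ∑ k ∈ Icc 1 n, (((k : ℝ) + 1) * rogersL (crossRatio n 1 k)
          + ((n : ℝ) + 2 - k) * rogersL (crossRatio n 1 k)) := by
        rw [mul_sum]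
        exact sum_congr rfl fun k _ => by ring
    _ = 2 * n * (π ^ 2 / 6) := by
        rw [sum_add_distrib, hreflect, sum_Icc_succ_mul_rogersL_crossRatio_one]
        ring

end DiagSum

theorem rogers_sum_identity_general (n : ℕ) :
    ∑ j ∈ Finset.Icc 1 n,
        rogersL (Real.sin (π / (n + 3)) ^ 2 / Real.sin (π * (j + 1) / (n + 3)) ^ 2)
      = π ^ 2 / 6 * (2 * n / (n + 3)) := by
  have hterm : ∀ j : ℕ, Real.sin (π / (n + 3)) ^ 2 / Real.sin (π * (j + 1) / (n + 3)) ^ 2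
      = crossRatio n 1 j := fun j => by
    simp only [crossRatio, chord, add_comm 1 j, Nat.cast_one, mul_one, Nat.cast_add, sq]
  simp_rw [hterm]
  have h := sum_Icc_rogersL_crossRatio_one (n := n)
  field_simp
  linear_combination 6 * h

/-- `∑_{j=1}^n L(sin²(π/(n+3))/sin²(π(j+1)/(n+3))) = (π²/6)·(2n/(n+3))`. -/
theorem rogers_sum_identity (n : ℕ) (hn : 1 ≤ n) :
    ∑ j ∈ Finset.Icc 1 n,
        rogersL (Real.sin (π / (n + 3)) ^ 2 / Real.sin (π * (j + 1) / (n + 3)) ^ 2)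
      = π ^ 2 / 6 * (2 * n / (n + 3)) :=
  rogers_sum_identity_general n
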